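/- Let K*_{n1,n2}(·;q1,q2;x,y) be the bivariate Dunkl q-Szász-Mirakjan-Kantorovich-Stancu operator. Then for all n1,n2 ∈ ℕ⁺, 0<q1,q2<1, μ1,μ2>1/2, α1,α2,β1,β2 ≥ 0 and x,y ≥ 0, applying the operator to the test function e_{1,0}(u,v)=u gives K*_{n1,n2}(e_{1,0};q1,q2;x,y) = (n1/(n1+β1))·(α1/n1 + 1/([2]_{q1}[n1]_{q1})) + (2n1·q1/([2]_{q1}(n1+β1)))·x. -/

import Mathlib

/-- The `q`-number `[x]_q = (1 - q^x)/(1 - q)` for a real exponent `x`. -/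
noncomputable def qNum (q x : ℝ) : ℝ := (1 - q ^ x) / (1 - q)

/-- `θ_k = 0` if `k` is even and `1` if `k` is odd. -/
def theta (k : ℕ) : ℕ := if Even k then 0 else 1

/-- The Dunkl `q`-gamma coefficients: `γ_{μ,q}(0) = 1`,
`γ_{μ,q}(k+1) = [2μθ_{k+1} + k + 1]_q ⬝ γ_{μ,q}(k)`. -/
noncomputable def gammaD (mu q : ℝ) : ℕ → ℝ
  | 0 => 1
  | k + 1 => qNum q (2 * mu * (theta (k + 1) : ℝ) + ((k : ℝ) + 1)) * gammaD mu q k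

/-- The Dunkl `q`-exponential `E_{μ,q}(x) = Σ q^{k(k-1)/2} x^k / γ_{μ,q}(k)`. -/
noncomputable def EDunkl (mu q x : ℝ) : ℝ :=
  ∑' k : ℕ, q ^ (k * (k - 1) / 2) * x ^ k / gammaD mu q k

/-- The Jackson `q`-integral `∫_a^b f(t) d_q t`. -/
noncomputable def jacksonInt (q : ℝ) (f : ℝ → ℝ) (a b : ℝ) : ℝ :=
  (1 - q) * (b * ∑' j : ℕ, q ^ j * f (b * q ^ j) - a * ∑' j : ℕ, q ^ j * f (a * q ^ j))

/-- Lower endpoint `[k + 2μθ_k]_q / (q^{k-2} [n]_q)`. -/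
noncomputable def lowB (q mu : ℝ) (n k : ℕ) : ℝ :=
  qNum q ((k : ℝ) + 2 * mu * (theta k : ℝ)) / (q ^ ((k : ℝ) - 2) * qNum q (n : ℝ))

/-- Upper endpoint `([k + 1 + 2μθ_k]_q - 1) / (q^{k-1} [n]_q) + 1/[n]_q`. -/
noncomputable def uppB (q mu : ℝ) (n k : ℕ) : ℝ :=
  (qNum q ((k : ℝ) + 1 + 2 * mu * (theta k : ℝ)) - 1) / (q ^ ((k : ℝ) - 1) * qNum q (n : ℝ))
    + 1 / qNum q (n : ℝ)

/-- The Dunkl `q`-Szász-Mirakjan-Kantorovich-Stancu operator `K̃_{n,q}(f;x)`. -/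
noncomputable def KT (n : ℕ) (q mu α β : ℝ) (f : ℝ → ℝ) (x : ℝ) : ℝ :=
  qNum q (n : ℝ) / EDunkl mu q (qNum q (n : ℝ) * x) *
    ∑' k : ℕ, (qNum q (n : ℝ) * x) ^ k / gammaD mu q k * q ^ (k * (k - 1) / 2) *
      jacksonInt q (fun t => f (((n : ℝ) * t + α) / ((n : ℝ) + β))) (lowB q mu n k) (uppB q mu n k)

/-- The bivariate Dunkl `q`-Szász-Mirakjan-Kantorovich-Stancu operator
`K*_{n₁,n₂}(f; q₁, q₂; x, y)`. -/
noncomputable def KB (n₁ n₂ : ℕ) (q₁ q₂ mu₁ mu₂ α₁ α₂ β₁ β₂ : ℝ) (f : ℝ → ℝ → ℝ)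
    (x y : ℝ) : ℝ :=
  qNum q₁ (n₁ : ℝ) * qNum q₂ (n₂ : ℝ) /
      (EDunkl mu₁ q₁ (qNum q₁ (n₁ : ℝ) * x) * EDunkl mu₂ q₂ (qNum q₂ (n₂ : ℝ) * y)) *
    ∑' k₁ : ℕ, ∑' k₂ : ℕ,
      (qNum q₁ (n₁ : ℝ) * x) ^ k₁ / gammaD mu₁ q₁ k₁ *
        ((qNum q₂ (n₂ : ℝ) * y) ^ k₂ / gammaD mu₂ q₂ k₂) *
        q₁ ^ (k₁ * (k₁ - 1) / 2) * q₂ ^ (k₂ * (k₂ - 1) / 2) *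
        jacksonInt q₂ (fun t =>
            jacksonInt q₁ (fun s =>
                f (((n₁ : ℝ) * s + α₁) / ((n₁ : ℝ) + β₁)) (((n₂ : ℝ) * t + α₂) / ((n₂ : ℝ) + β₂)))
              (lowB q₁ mu₁ n₁ k₁) (uppB q₁ mu₁ n₁ k₁))
          (lowB q₂ mu₂ n₂ k₂) (uppB q₂ mu₂ n₂ k₂)

/-!
For `f(u, v) = g(u)` the inner Jackson integral does not depend on `t`, and every node interval
`[lowB k, uppB k]` has length `1/[n]_q`. Hence the `k₂`-sum reproduces
`E_{μ₂,q₂}([n₂]y) / [n₂]` and the bivariate operator collapses to the univariate one in `x`.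
For `g = id` the Jackson integral of the affine Stancu map over `[a, a + 1/[n]]` is affine in
`a = lowB k`, so the result follows from `∑ E_k(z) = E(z)` and the first moment
`∑ E_k(z) · lowB k = q z / [n] · E(z)`, where `E_k` is the `k`-th term of the Dunkl exponential.
-/

section QNumber

variable {q : ℝ}

lemma qNum_pos (hq0 : 0 < q) (hq1 : q < 1) {t : ℝ} (ht : 0 < t) : 0 < qNum q t :=
  div_pos (sub_pos.2 (Real.rpow_lt_one hq0.le hq1 ht)) (sub_pos.2 hq1)

lemma one_le_qNum (hq0 : 0 < q) (hq1 : q < 1) {t : ℝ} (ht : 1 ≤ t) : 1 ≤ qNum q t := by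
  have h : q ^ t ≤ q := by
    simpa using Real.rpow_le_rpow_of_exponent_ge hq0 hq1.le ht
  rw [qNum, le_div_iff₀ (sub_pos.2 hq1)]
  linarith

lemma qNum_add_one (hq0 : 0 < q) (hq1 : q ≠ 1) (t : ℝ) : qNum q (t + 1) = 1 + q * qNum q t := by
  have h : 1 - q ≠ 0 := sub_ne_zero.2 hq1.symm
  rw [qNum, qNum, Real.rpow_add hq0, Real.rpow_one]
  field_simp
  ring

lemma qNum_two (hq0 : 0 < q) (hq1 : q ≠ 1) : qNum q 2 = 1 + q := by
  have h1 : qNum q 1 = 1 := by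
    rw [qNum, Real.rpow_one]
    exact div_self (sub_ne_zero.2 hq1.symm)
  rw [show (2 : ℝ) = 1 + 1 by norm_num, qNum_add_one hq0 hq1, h1, mul_one]

end QNumber

section JacksonIntegral

variable {q : ℝ}

lemma jacksonInt_affine (hq : |q| < 1) (p r a b : ℝ) :
    jacksonInt q (fun t => p * t + r) a b = p * (b ^ 2 - a ^ 2) / (1 + q) + r * (b - a) := by
  have hq2 : |q ^ 2| < 1 := by rw [abs_pow]; exact pow_lt_one₀ (abs_nonneg q) hq two_ne_zero
  have h1 : 1 - q ≠ 0 := by linarith [le_abs_self q]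
  have h2 : 1 + q ≠ 0 := by linarith [neg_abs_le q]
  have h3 : 1 - q ^ 2 ≠ 0 := by linarith [le_abs_self (q ^ 2)]
  have hgeom (c : ℝ) :
      ∑' j : ℕ, q ^ j * (p * (c * q ^ j) + r) = p * c * (1 - q ^ 2)⁻¹ + r * (1 - q)⁻¹ := by
    have hsplit : (fun j : ℕ => q ^ j * (p * (c * q ^ j) + r))
        = fun j : ℕ => p * c * (q ^ 2) ^ j + r * q ^ j := by
      funext j; ring
    rw [hsplit, ((summable_geometric_of_abs_lt_one hq2).mul_left _).tsum_add
      ((summable_geometric_of_abs_lt_one hq).mul_left _), tsum_mul_left, tsum_mul_left,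
      tsum_geometric_of_abs_lt_one hq2, tsum_geometric_of_abs_lt_one hq]
  rw [jacksonInt, hgeom a, hgeom b]
  field_simp
  ring

lemma jacksonInt_const (hq : |q| < 1) (c a b : ℝ) :
    jacksonInt q (fun _ => c) a b = c * (b - a) := by
  simpa using jacksonInt_affine hq 0 c a b

end JacksonIntegral

section DunklExponential

variable {mu q : ℝ}

lemma gammaD_pos (hq0 : 0 < q) (hq1 : q < 1) (hmu : 0 ≤ mu) (k : ℕ) : 0 < gammaD mu q k := by
  induction k with
  | zero => exact one_pos
  | succ k ih =>
    exact mul_pos (qNum_pos hq0 hq1 (by positivity)) ih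

noncomputable def EDunklTerm (mu q z : ℝ) (k : ℕ) : ℝ :=
  q ^ (k * (k - 1) / 2) * z ^ k / gammaD mu q k

lemma EDunklTerm_succ (hq0 : 0 < q) (hq1 : q < 1) (hmu : 0 ≤ mu) (z : ℝ) (k : ℕ) :
    EDunklTerm mu q z (k + 1) =
      EDunklTerm mu q z k * (q ^ k * z / qNum q (2 * mu * theta (k + 1) + (k + 1))) := by
  have hqNum : qNum q (2 * mu * theta (k + 1) + (k + 1)) ≠ 0 :=
    (qNum_pos hq0 hq1 (by positivity)).ne'
  have hgamma := (gammaD_pos hq0 hq1 hmu k).ne'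
  rw [EDunklTerm, EDunklTerm, gammaD, Nat.triangle_succ, pow_add]
  field_simp
  ring

lemma summable_EDunklTerm (hq0 : 0 < q) (hq1 : q < 1) (hmu : 0 ≤ mu) (z : ℝ) :
    Summable (EDunklTerm mu q z) := by
  refine summable_of_ratio_norm_eventually_le (r := 1 / 2) (by norm_num) ?_
  have hsmall : Filter.Tendsto (fun k : ℕ => q ^ k * |z|) Filter.atTop (nhds 0) := by
    simpa using (tendsto_pow_atTop_nhds_zero_of_lt_one hq0.le hq1).mul_const |z|
  filter_upwards [hsmall.eventually_lt_const (by norm_num : (0 : ℝ) < 1 / 2)] with k hk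
  have hratio : ‖q ^ k * z / qNum q (2 * mu * theta (k + 1) + (k + 1))‖ ≤ q ^ k * |z| := by
    rw [Real.norm_eq_abs, abs_div, abs_mul, abs_pow, abs_of_pos hq0,
      abs_of_pos (qNum_pos hq0 hq1 (by positivity))]
    refine div_le_self (by positivity) (one_le_qNum hq0 hq1 ?_)
    have : (0 : ℝ) ≤ 2 * mu * theta (k + 1) + k := by positivity
    linarith
  rw [EDunklTerm_succ hq0 hq1 hmu, norm_mul, mul_comm]
  exact mul_le_mul_of_nonneg_right (hratio.trans hk.le) (norm_nonneg _)

lemma hasSum_EDunklTerm (hq0 : 0 < q) (hq1 : q < 1) (hmu : 0 ≤ mu) (z : ℝ) :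
    HasSum (EDunklTerm mu q z) (EDunkl mu q z) :=
  (summable_EDunklTerm hq0 hq1 hmu z).hasSum

lemma one_le_EDunkl (hq0 : 0 < q) (hq1 : q < 1) (hmu : 0 ≤ mu) {z : ℝ} (hz : 0 ≤ z) :
    1 ≤ EDunkl mu q z := by
  have hterm_nonneg (k : ℕ) : 0 ≤ EDunklTerm mu q z k :=
    div_nonneg (by positivity) (gammaD_pos hq0 hq1 hmu k).le
  calc 1 = EDunklTerm mu q z 0 := by simp [EDunklTerm, gammaD]
    _ ≤ EDunkl mu q z := (summable_EDunklTerm hq0 hq1 hmu z).le_tsum 0 (fun k _ => hterm_nonneg k)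

end DunklExponential

section KantorovichNodes

variable {mu q : ℝ}

lemma lowB_zero (n : ℕ) : lowB q mu n 0 = 0 := by
  simp [lowB, qNum, theta]

lemma uppB_eq_lowB_add (hq0 : 0 < q) (hq1 : q ≠ 1) (n k : ℕ) :
    uppB q mu n k = lowB q mu n k + 1 / qNum q n := by
  have hpow : q ^ ((k : ℝ) - 1) = q * q ^ ((k : ℝ) - 2) := by
    rw [show (k : ℝ) - 1 = 1 + ((k : ℝ) - 2) by ring, Real.rpow_add hq0, Real.rpow_one]
  rw [uppB, lowB, show (k : ℝ) + 1 + 2 * mu * theta k = (k + 2 * mu * theta k) + 1 by ring,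
    qNum_add_one hq0 hq1, add_sub_cancel_left, hpow, mul_assoc q, mul_div_mul_left _ _ hq0.ne']

/-- The numerator `[k + 1 + 2μθ_{k+1}]_q` of `lowB (k + 1)` cancels the last factor of
`γ_{μ,q}(k + 1)`. -/
lemma EDunklTerm_succ_mul_lowB (hq0 : 0 < q) (hq1 : q < 1) (hmu : 0 ≤ mu) (n : ℕ) (z : ℝ)
    (k : ℕ) :
    EDunklTerm mu q z (k + 1) * lowB q mu n (k + 1) = q * z / qNum q n * EDunklTerm mu q z k := by
  have hqNum : qNum q (2 * mu * theta (k + 1) + (k + 1)) ≠ 0 :=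
    (qNum_pos hq0 hq1 (by positivity)).ne'
  have hpow : q ^ (((k + 1 : ℕ) : ℝ) - 2) = q ^ k / q := by
    rw [Nat.cast_succ, show (k : ℝ) + 1 - 2 = k + (-1) by ring, Real.rpow_add hq0,
      Real.rpow_natCast, Real.rpow_neg_one, div_eq_mul_inv]
  have hqk : q ^ k ≠ 0 := pow_ne_zero _ hq0.ne'
  rw [EDunklTerm_succ hq0 hq1 hmu, lowB, hpow, Nat.cast_succ,
    show (k : ℝ) + 1 + 2 * mu * theta (k + 1) = 2 * mu * theta (k + 1) + (k + 1) by ring]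
  field_simp

lemma hasSum_EDunklTerm_mul_lowB (hq0 : 0 < q) (hq1 : q < 1) (hmu : 0 ≤ mu) (n : ℕ) (z : ℝ) :
    HasSum (fun k => EDunklTerm mu q z k * lowB q mu n k) (q * z / qNum q n * EDunkl mu q z) := by
  rw [← hasSum_nat_add_iff' 1]
  simp only [Finset.range_one, Finset.sum_singleton, lowB_zero, mul_zero, sub_zero,
    EDunklTerm_succ_mul_lowB hq0 hq1 hmu]
  exact (summable_EDunklTerm hq0 hq1 hmu z).hasSum.mul_left _

end KantorovichNodes

section KantorovichOperator

variable {n : ℕ} {q mu : ℝ}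

lemma KT_eq_of_jacksonInt_eq_affine (hn : 0 < n) (hq0 : 0 < q) (hq1 : q < 1) (hmu : 0 ≤ mu)
    {α β : ℝ} {f : ℝ → ℝ} {c d : ℝ}
    (hnode : ∀ k, jacksonInt q (fun t => f ((n * t + α) / (n + β))) (lowB q mu n k) (uppB q mu n k)
      = c + d * lowB q mu n k) {x : ℝ} (hx : 0 ≤ x) :
    KT n q mu α β f x = qNum q n * c + d * q * qNum q n * x := by
  have hN : 0 < qNum q n := qNum_pos hq0 hq1 (Nat.cast_pos.2 hn)
  have hE : EDunkl mu q (qNum q n * x) ≠ 0 :=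
    (one_pos.trans_le (one_le_EDunkl hq0 hq1 hmu (mul_nonneg hN.le hx))).ne'
  have hsum := ((hasSum_EDunklTerm hq0 hq1 hmu (qNum q n * x)).mul_left c).add
    ((hasSum_EDunklTerm_mul_lowB hq0 hq1 hmu n (qNum q n * x)).mul_left d)
  rw [KT, (hsum.congr_fun fun k => by rw [hnode, EDunklTerm]; ring).tsum_eq]
  field_simp [hN.ne']

lemma KT_id (hn : 0 < n) (hq0 : 0 < q) (hq1 : q < 1) (hmu : 0 ≤ mu) (α β : ℝ) {x : ℝ}
    (hx : 0 ≤ x) :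
    KT n q mu α β (fun u => u) x =
      n / (n + β) * (α / n + 1 / (qNum q 2 * qNum q n)) + 2 * n * q / (qNum q 2 * (n + β)) * x := by
  have hN : qNum q n ≠ 0 := (qNum_pos hq0 hq1 (Nat.cast_pos.2 hn)).ne'
  have hn' : (n : ℝ) ≠ 0 := Nat.cast_ne_zero.2 hn.ne'
  have hq2 : 1 + q ≠ 0 := by linarith
  have hstancu : (fun t : ℝ => (n * t + α) / (n + β)) = fun t => n / (n + β) * t + α / (n + β) := by
    funext t; ring
  have hnode (k : ℕ) :
      jacksonInt q (fun t => (n * t + α) / (n + β)) (lowB q mu n k) (uppB q mu n k) =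
        (n / (n + β) / ((1 + q) * qNum q n ^ 2) + α / (n + β) / qNum q n) +
          2 * (n / (n + β)) / ((1 + q) * qNum q n) * lowB q mu n k := by
    rw [hstancu, jacksonInt_affine (abs_lt.2 ⟨by linarith, hq1⟩), uppB_eq_lowB_add hq0 hq1.ne]
    field_simp
    ring
  -- `n + β` may vanish, so `n` is cancelled by hand before clearing denominators.
  have hα : n / (n + β) * (α / n) = α / (n + β) := by
    rw [div_mul_div_comm, mul_comm (n : ℝ) α, mul_div_mul_right _ _ hn']
  rw [KT_eq_of_jacksonInt_eq_affine hn hq0 hq1 hmu hnode hx, qNum_two hq0 hq1.ne,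
    mul_add ((n : ℝ) / (n + β)), hα]
  field_simp
  ring

end KantorovichOperator

lemma KB_comp_fst {n₂ : ℕ} (hn₂ : 0 < n₂) {q₂ mu₂ : ℝ} (hq₂0 : 0 < q₂) (hq₂1 : q₂ < 1)
    (hmu₂ : 0 ≤ mu₂) (n₁ : ℕ) (q₁ mu₁ α₁ α₂ β₁ β₂ : ℝ) (g : ℝ → ℝ) (x : ℝ) {y : ℝ} (hy : 0 ≤ y) :
    KB n₁ n₂ q₁ q₂ mu₁ mu₂ α₁ α₂ β₁ β₂ (fun u _ => g u) x y = KT n₁ q₁ mu₁ α₁ β₁ g x := by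
  have hN₂ : 0 < qNum q₂ n₂ := qNum_pos hq₂0 hq₂1 (Nat.cast_pos.2 hn₂)
  have hE₂ : EDunkl mu₂ q₂ (qNum q₂ n₂ * y) ≠ 0 :=
    (one_pos.trans_le (one_le_EDunkl hq₂0 hq₂1 hmu₂ (mul_nonneg hN₂.le hy))).ne'
  have hnode (c : ℝ) (k₂ : ℕ) :
      jacksonInt q₂ (fun _ => c) (lowB q₂ mu₂ n₂ k₂) (uppB q₂ mu₂ n₂ k₂) = c / qNum q₂ n₂ := by
    rw [jacksonInt_const (abs_lt.2 ⟨by linarith, hq₂1⟩), uppB_eq_lowB_add hq₂0 hq₂1.ne]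
    ring
  have hinner (a b c : ℝ) :
      ∑' k₂ : ℕ, a * ((qNum q₂ n₂ * y) ^ k₂ / gammaD mu₂ q₂ k₂) * b * q₂ ^ (k₂ * (k₂ - 1) / 2) *
          (c / qNum q₂ n₂)
        = a * b * c * (EDunkl mu₂ q₂ (qNum q₂ n₂ * y) / qNum q₂ n₂) :=
    (((hasSum_EDunklTerm hq₂0 hq₂1 hmu₂ (qNum q₂ n₂ * y)).mul_left
      (a * b * c / qNum q₂ n₂)).congr_fun fun k₂ => by rw [EDunklTerm]; ring).tsum_eq.trans (by ring)
  simp only [KB, hnode, hinner, tsum_mul_right]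
  rw [KT]
  field_simp [hN₂.ne']

theorem KB_e10_general (n₁ n₂ : ℕ) (hn₁ : 0 < n₁) (hn₂ : 0 < n₂)
    (q₁ q₂ mu₁ mu₂ α₁ α₂ β₁ β₂ x y : ℝ)
    (hq₁0 : 0 < q₁) (hq₁1 : q₁ < 1) (hq₂0 : 0 < q₂) (hq₂1 : q₂ < 1)
    (hmu₁ : 1 / 2 < mu₁) (hmu₂ : 1 / 2 < mu₂)
    (hx : 0 ≤ x) (hy : 0 ≤ y) :
    KB n₁ n₂ q₁ q₂ mu₁ mu₂ α₁ α₂ β₁ β₂ (fun u _ => u) x y =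
      (n₁ : ℝ) / ((n₁ : ℝ) + β₁) * (α₁ / (n₁ : ℝ) + 1 / (qNum q₁ 2 * qNum q₁ (n₁ : ℝ)))
        + 2 * (n₁ : ℝ) * q₁ / (qNum q₁ 2 * ((n₁ : ℝ) + β₁)) * x :=
  (KB_comp_fst hn₂ hq₂0 hq₂1 (by linarith) n₁ q₁ mu₁ α₁ α₂ β₁ β₂ (fun u => u) x hy).trans
    (KT_id hn₁ hq₁0 hq₁1 (by linarith) α₁ β₁ hx)

/-- `K*_{n₁,n₂}(e_{1,0}; q₁, q₂; x, y)
  = (n₁/(n₁+β₁))(α₁/n₁ + 1/([2]_{q₁}[n₁]_{q₁})) + (2n₁q₁/([2]_{q₁}(n₁+β₁))) x`. -/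
theorem KB_e10 (n₁ n₂ : ℕ) (hn₁ : 0 < n₁) (hn₂ : 0 < n₂)
    (q₁ q₂ mu₁ mu₂ α₁ α₂ β₁ β₂ x y : ℝ)
    (hq₁0 : 0 < q₁) (hq₁1 : q₁ < 1) (hq₂0 : 0 < q₂) (hq₂1 : q₂ < 1)
    (hmu₁ : 1 / 2 < mu₁) (hmu₂ : 1 / 2 < mu₂)
    (hα₁ : 0 ≤ α₁) (hα₂ : 0 ≤ α₂) (hβ₁ : 0 ≤ β₁) (hβ₂ : 0 ≤ β₂)
    (hx : 0 ≤ x) (hy : 0 ≤ y) :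
    KB n₁ n₂ q₁ q₂ mu₁ mu₂ α₁ α₂ β₁ β₂ (fun u _ => u) x y =
      (n₁ : ℝ) / ((n₁ : ℝ) + β₁) * (α₁ / (n₁ : ℝ) + 1 / (qNum q₁ 2 * qNum q₁ (n₁ : ℝ)))
        + 2 * (n₁ : ℝ) * q₁ / (qNum q₁ 2 * ((n₁ : ℝ) + β₁)) * x :=
  KB_e10_general n₁ n₂ hn₁ hn₂ q₁ q₂ mu₁ mu₂ α₁ α₂ β₁ β₂ x y hq₁0 hq₁1 hq₂0 hq₂1 hmu₁ hmu₂ hx hy
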